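/- arXiv:2309.12723 — 3 statements merged into one kernel-verified Lean document; each statement's English description precedes it below -/
import Mathlib

section
/- Let U, I, K, L be finite nonempty types and let p : U × I × K × L → ℝ be a strictly positive joint probability mass function, i.e. p(u,i,k,l) > 0 for all arguments and ∑_{u,i,k,l} p(u,i,k,l) = 1. Define the marginals p_K(k) = ∑_{u,i,l} p(u,i,k,l), p_L(l) = ∑_{u,i,k} p(u,i,k,l), p_{KL}(k,l) = ∑_{u,i} p(u,i,k,l), p_{UK}(u,k) = ∑_{i,l} p(u,i,k,l), and p_{IL}(i,l) = ∑_{u,k} p(u,i,k,l). Then for every k ∈ K and l ∈ L: log (p_K(k) · p_L(l)) ≥ ∑_{u∈U, i∈I} (p(u,i,k,l) / p_{KL}(k,l)) · log ( (p_{UK}(u,k) · p_{IL}(i,l) · p_{KL}(k,l)) / p(u,i,k,l) ). (This is Lemma 1 of the paper: log p(k)p(l) ≥ ∑_{u,i} p(u,i|k,l) log [p(u,k)p(i,l) / p(u,i|k,l)], with the conditional probability p(u,i|k,l) written explicitly as p(u,i,k,l)/p_{KL}(k,l).) -/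
/-- Lemma 1 of the paper: for a strictly positive joint pmf `p` on `U × I × K × L`,
for every `k, l`:
`log (p_K k * p_L l) ≥ ∑_{u,i} (p u i k l / p_KL k l) * log (p_UK u k * p_IL i l * p_KL k l / p u i k l)`. -/
theorem lemma1_log_marginal_bound
    {U I K L : Type*} [Fintype U] [Fintype I] [Fintype K] [Fintype L]
    [Nonempty U] [Nonempty I] [Nonempty K] [Nonempty L]
    (p : U → I → K → L → ℝ)
    (hpos : ∀ u i k l, 0 < p u i k l)
    (hsum : ∑ u, ∑ i, ∑ k, ∑ l, p u i k l = 1)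
    (pK : K → ℝ) (hpK : ∀ k, pK k = ∑ u, ∑ i, ∑ l, p u i k l)
    (pL : L → ℝ) (hpL : ∀ l, pL l = ∑ u, ∑ i, ∑ k, p u i k l)
    (pKL : K → L → ℝ) (hpKL : ∀ k l, pKL k l = ∑ u, ∑ i, p u i k l)
    (pUK : U → K → ℝ) (hpUK : ∀ u k, pUK u k = ∑ i, ∑ l, p u i k l)
    (pIL : I → L → ℝ) (hpIL : ∀ i l, pIL i l = ∑ u, ∑ k, p u i k l) :
    ∀ k l,
      ∑ u, ∑ i, (p u i k l / pKL k l) *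
          Real.log (pUK u k * pIL i l * pKL k l / p u i k l)
        ≤ Real.log (pK k * pL l) := by
  intro k l
  have hKL : 0 < pKL k l := by
    rw [hpKL]
    exact Finset.sum_pos (fun u _ => Finset.sum_pos (fun i _ => hpos u i k l)
      Finset.univ_nonempty) Finset.univ_nonempty
  have hUK : ∀ u, 0 < pUK u k := fun u => by
    rw [hpUK]
    exact Finset.sum_pos (fun i _ => Finset.sum_pos (fun l _ => hpos u i k l)
      Finset.univ_nonempty) Finset.univ_nonempty
  have hIL : ∀ i, 0 < pIL i l := fun i => by
    rw [hpIL]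
    exact Finset.sum_pos (fun u _ => Finset.sum_pos (fun k _ => hpos u i k l)
      Finset.univ_nonempty) Finset.univ_nonempty
  set w : U × I → ℝ := fun x => p x.1 x.2 k l / pKL k l with hw
  set q : U × I → ℝ := fun x => pUK x.1 k * pIL x.2 l * pKL k l / p x.1 x.2 k l with hq
  have hw0 : ∀ x ∈ Finset.univ (α := U × I), 0 ≤ w x := fun x _ =>
    le_of_lt (div_pos (hpos x.1 x.2 k l) hKL)
  have hw1 : ∑ x : U × I, w x = 1 := by
    rw [← Finset.sum_div, Fintype.sum_prod_type, ← hpKL, div_self hKL.ne']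
  have hmem : ∀ x ∈ Finset.univ (α := U × I), q x ∈ Set.Ioi (0 : ℝ) := fun x _ =>
    div_pos (mul_pos (mul_pos (hUK x.1) (hIL x.2)) hKL) (hpos x.1 x.2 k l)
  have jensen := strictConcaveOn_log_Ioi.concaveOn.le_map_sum hw0 hw1 hmem
  have hsum_wq : ∑ x : U × I, w x • q x = pK k * pL l := by
    have key : ∀ x : U × I, w x • q x = pUK x.1 k * pIL x.2 l := by
      intro x
      simp only [hw, hq, smul_eq_mul]
      rw [div_mul_div_comm, show p x.1 x.2 k l * (pUK x.1 k * pIL x.2 l * pKL k l)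
        = (pUK x.1 k * pIL x.2 l) * (pKL k l * p x.1 x.2 k l) by ring]
      exact mul_div_cancel_right₀ _ (mul_pos hKL (hpos x.1 x.2 k l)).ne'
    have step : ∑ x : U × I, w x • q x = ∑ u, ∑ i, pUK u k * pIL i l := by
      rw [Fintype.sum_prod_type]
      exact Finset.sum_congr rfl fun u _ => Finset.sum_congr rfl fun i _ => key (u, i)
    rw [step, ← Finset.sum_mul_sum]
    congr 1
    · rw [hpK]
      exact Finset.sum_congr rfl fun u _ => by rw [hpUK]
    · rw [hpL]
      simp only [hpIL]
      rw [Finset.sum_comm]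
  rw [hsum_wq] at jensen
  calc ∑ u, ∑ i, (p u i k l / pKL k l) *
          Real.log (pUK u k * pIL i l * pKL k l / p u i k l)
      = ∑ x : U × I, w x • Real.log (q x) := by
        rw [Fintype.sum_prod_type]; rfl
    _ ≤ Real.log (pK k * pL l) := jensen
end

section
/- Let U, I, K, L be finite nonempty types and let p : U × I × K × L → ℝ be a strictly positive joint probability mass function (p(u,i,k,l) > 0 for all arguments and ∑ p = 1). With marginals p_K(k) = ∑_{u,i,l} p(u,i,k,l), p_L(l) = ∑_{u,i,k} p(u,i,k,l), p_{KL}(k,l) = ∑_{u,i} p(u,i,k,l), p_{UK}(u,k) = ∑_{i,l} p(u,i,k,l), p_{IL}(i,l) = ∑_{u,k} p(u,i,k,l), the mutual information MI(K;L) = ∑_{k,l} p_{KL}(k,l) · log ( p_{KL}(k,l) / (p_K(k) · p_L(l)) ) satisfies MI(K;L) ≤ ∑_{u,i,k,l} p(u,i,k,l) · log ( p(u,i,k,l) / (p_{UK}(u,k) · p_{IL}(i,l)) ). (This is the intermediate bound, denoted R in the paper, obtained by combining the definition of MI(K;L) with Lemma 1.) -/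
private lemma swap4 {U I K L : Type*} [Fintype U] [Fintype I] [Fintype K] [Fintype L]
    (f : U → I → K → L → ℝ) :
    ∑ u, ∑ i, ∑ k, ∑ l, f u i k l = ∑ k, ∑ l, ∑ u, ∑ i, f u i k l := by
  have h1 : ∑ u, ∑ i, ∑ k, ∑ l, f u i k l = ∑ u, ∑ k, ∑ i, ∑ l, f u i k l :=
    Finset.sum_congr rfl fun u _ => Finset.sum_comm
  have h2 : ∑ u, ∑ k, ∑ i, ∑ l, f u i k l = ∑ k, ∑ u, ∑ i, ∑ l, f u i k l :=
    Finset.sum_comm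
  have h3 : ∑ k, ∑ u, ∑ i, ∑ l, f u i k l = ∑ k, ∑ u, ∑ l, ∑ i, f u i k l :=
    Finset.sum_congr rfl fun k _ => Finset.sum_congr rfl fun u _ => Finset.sum_comm
  have h4 : ∑ k, ∑ u, ∑ l, ∑ i, f u i k l = ∑ k, ∑ l, ∑ u, ∑ i, f u i k l :=
    Finset.sum_congr rfl fun k _ => Finset.sum_comm
  rw [h1, h2, h3, h4]

/-- Intermediate bound `R` of the paper: for a strictly positive joint pmf `p` on
`U × I × K × L`, the mutual information of the `K` and `L` coordinates satisfies
`MI(K;L) ≤ ∑_{u,i,k,l} p(u,i,k,l) * log (p(u,i,k,l) / (p_UK(u,k) * p_IL(i,l)))`. -/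
theorem mi_KL_le_R
    {U I K L : Type*} [Fintype U] [Fintype I] [Fintype K] [Fintype L]
    [Nonempty U] [Nonempty I] [Nonempty K] [Nonempty L]
    (p : U → I → K → L → ℝ)
    (hpos : ∀ u i k l, 0 < p u i k l)
    (hsum : ∑ u, ∑ i, ∑ k, ∑ l, p u i k l = 1)
    (pK : K → ℝ) (hpK : ∀ k, pK k = ∑ u, ∑ i, ∑ l, p u i k l)
    (pL : L → ℝ) (hpL : ∀ l, pL l = ∑ u, ∑ i, ∑ k, p u i k l)
    (pKL : K → L → ℝ) (hpKL : ∀ k l, pKL k l = ∑ u, ∑ i, p u i k l)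
    (pUK : U → K → ℝ) (hpUK : ∀ u k, pUK u k = ∑ i, ∑ l, p u i k l)
    (pIL : I → L → ℝ) (hpIL : ∀ i l, pIL i l = ∑ u, ∑ k, p u i k l) :
    ∑ k, ∑ l, pKL k l * Real.log (pKL k l / (pK k * pL l))
      ≤ ∑ u, ∑ i, ∑ k, ∑ l,
          p u i k l * Real.log (p u i k l / (pUK u k * pIL i l)) := by
  -- positivity of marginals
  have hKpos : ∀ k, 0 < pK k := fun k => by
    rw [hpK]
    exact Finset.sum_pos (fun u _ => Finset.sum_pos (fun i _ =>
      Finset.sum_pos (fun l _ => hpos u i k l) Finset.univ_nonempty) Finset.univ_nonempty)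
      Finset.univ_nonempty
  have hLpos : ∀ l, 0 < pL l := fun l => by
    rw [hpL]
    exact Finset.sum_pos (fun u _ => Finset.sum_pos (fun i _ =>
      Finset.sum_pos (fun k _ => hpos u i k l) Finset.univ_nonempty) Finset.univ_nonempty)
      Finset.univ_nonempty
  have hKLpos : ∀ k l, 0 < pKL k l := fun k l => by
    rw [hpKL]
    exact Finset.sum_pos (fun u _ => Finset.sum_pos (fun i _ => hpos u i k l)
      Finset.univ_nonempty) Finset.univ_nonempty
  have hUKpos : ∀ u k, 0 < pUK u k := fun u k => by
    rw [hpUK]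
    exact Finset.sum_pos (fun i _ => Finset.sum_pos (fun l _ => hpos u i k l)
      Finset.univ_nonempty) Finset.univ_nonempty
  have hILpos : ∀ i l, 0 < pIL i l := fun i l => by
    rw [hpIL]
    exact Finset.sum_pos (fun u _ => Finset.sum_pos (fun k _ => hpos u i k l)
      Finset.univ_nonempty) Finset.univ_nonempty
  -- auxiliary distribution q
    -- q u i k l = pUK u k * pIL i l * pKL k l / (pK k * pL l)
  set q : U → I → K → L → ℝ :=
    fun u i k l => pUK u k * pIL i l * pKL k l / (pK k * pL l) with hq
  have hqpos : ∀ u i k l, 0 < q u i k l := fun u i k l => by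
    have := hUKpos u k; have := hILpos i l; have := hKLpos k l
    have := hKpos k; have := hLpos l
    positivity
  -- marginal identities
  have hUKsum : ∀ k, ∑ u, pUK u k = pK k := fun k => by
    rw [hpK]; exact Finset.sum_congr rfl fun u _ => hpUK u k
  have hILsum : ∀ l, ∑ i, pIL i l = pL l := fun l => by
    rw [hpL]
    have : ∑ i, pIL i l = ∑ i, ∑ u, ∑ k, p u i k l :=
      Finset.sum_congr rfl fun i _ => hpIL i l
    rw [this, Finset.sum_comm]
  have hKLsum : ∑ k, ∑ l, pKL k l = 1 := by
    rw [← hsum, swap4 p]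
    exact Finset.sum_congr rfl fun k _ => Finset.sum_congr rfl fun l _ => hpKL k l
  -- q sums to 1
  have hqsum : ∑ u, ∑ i, ∑ k, ∑ l, q u i k l = 1 := by
    rw [swap4 q, ← hKLsum]
    refine Finset.sum_congr rfl fun k _ => Finset.sum_congr rfl fun l _ => ?_
    have e1 : ∀ u, ∑ i, q u i k l
        = pUK u k * ((∑ i, pIL i l) * (pKL k l / (pK k * pL l))) := fun u => by
      rw [Finset.sum_mul, Finset.mul_sum]
      exact Finset.sum_congr rfl fun i _ => by simp only [hq]; ring
    calc ∑ u, ∑ i, q u i k l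
        = ∑ u, pUK u k * ((∑ i, pIL i l) * (pKL k l / (pK k * pL l))) :=
          Finset.sum_congr rfl fun u _ => e1 u
      _ = (∑ u, pUK u k) * ((∑ i, pIL i l) * (pKL k l / (pK k * pL l))) :=
          (Finset.sum_mul _ _ _).symm
      _ = pKL k l := by
          rw [hUKsum, hILsum]
          field_simp [(hKpos k).ne', (hLpos l).ne']
  -- pointwise inequality
  have key : ∀ u i k l,
      p u i k l * Real.log (pKL k l / (pK k * pL l))
        - p u i k l * Real.log (p u i k l / (pUK u k * pIL i l))
      ≤ q u i k l - p u i k l := by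
    intro u i k l
    have hp := hpos u i k l
    have hqp := hqpos u i k l
    have hlog : Real.log (pKL k l / (pK k * pL l))
        - Real.log (p u i k l / (pUK u k * pIL i l))
        = Real.log (q u i k l / p u i k l) := by
      rw [Real.log_div (by positivity) hp.ne', hq]
      rw [Real.log_div (hKLpos k l).ne' (by have := hKpos k; have := hLpos l; positivity),
        Real.log_div hp.ne' (by have := hUKpos u k; have := hILpos i l; positivity),
        Real.log_div (by have := hUKpos u k; have := hILpos i l; have := hKLpos k l; positivity)
          (by have := hKpos k; have := hLpos l; positivity),
        Real.log_mul (hKpos k).ne' (hLpos l).ne',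
        Real.log_mul (hUKpos u k).ne' (hILpos i l).ne',
        Real.log_mul (by have := hUKpos u k; have := hILpos i l; positivity) (hKLpos k l).ne',
        Real.log_mul (hUKpos u k).ne' (hILpos i l).ne']
      ring
    rw [← mul_sub, hlog]
    have hle : Real.log (q u i k l / p u i k l) ≤ q u i k l / p u i k l - 1 :=
      Real.log_le_sub_one_of_pos (by positivity)
    calc p u i k l * Real.log (q u i k l / p u i k l)
        ≤ p u i k l * (q u i k l / p u i k l - 1) := by
          exact mul_le_mul_of_nonneg_left hle hp.le
      _ = q u i k l - p u i k l := by field_simp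
  -- rewrite MI as a quadruple sum
  have hMI : ∑ k, ∑ l, pKL k l * Real.log (pKL k l / (pK k * pL l))
      = ∑ u, ∑ i, ∑ k, ∑ l, p u i k l * Real.log (pKL k l / (pK k * pL l)) := by
    rw [swap4 (fun u i k l => p u i k l * Real.log (pKL k l / (pK k * pL l)))]
    refine Finset.sum_congr rfl fun k _ => Finset.sum_congr rfl fun l _ => ?_
    rw [hpKL, Finset.sum_mul]
    exact Finset.sum_congr rfl fun u _ => (Finset.sum_mul _ _ _)
  rw [hMI]
  have hdiff : ∑ u, ∑ i, ∑ k, ∑ l,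
      (p u i k l * Real.log (pKL k l / (pK k * pL l))
        - p u i k l * Real.log (p u i k l / (pUK u k * pIL i l)))
      ≤ ∑ u, ∑ i, ∑ k, ∑ l, (q u i k l - p u i k l) := by
    refine Finset.sum_le_sum fun u _ => Finset.sum_le_sum fun i _ =>
      Finset.sum_le_sum fun k _ => Finset.sum_le_sum fun l _ => key u i k l
  simp only [Finset.sum_sub_distrib] at hdiff
  rw [hqsum, hsum, sub_self] at hdiff
  linarith [hdiff]
end

section
/- Let U, I, K, L be finite nonempty types. Let p_{UI} : U × I → ℝ be a strictly positive probability mass function (∑_{u,i} p_{UI}(u,i) = 1, all values > 0), and let q : U × K → ℝ and r : I × L → ℝ be strictly positive conditional kernels, i.e. q(u,k) > 0 with ∑_k q(u,k) = 1 for every u, and r(i,l) > 0 with ∑_l r(i,l) = 1 for every i. Define the joint probability mass function p(u,i,k,l) = p_{UI}(u,i) · q(u,k) · r(i,l), with marginals p_{UK}(u,k) = ∑_{i,l} p(u,i,k,l), p_{IL}(i,l) = ∑_{u,k} p(u,i,k,l), p_U(u) = ∑_i p_{UI}(u,i), and p_I(i) = ∑_u p_{UI}(u,i). Then ∑_{u,i,k,l}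 p(u,i,k,l) · log ( p(u,i,k,l) / (p_{UK}(u,k) · p_{IL}(i,l)) ) = ∑_{u,i} p_{UI}(u,i) · log ( p_{UI}(u,i) / (p_U(u) · p_I(i)) ). (This is the paper's computation showing that, under the conditional independence p(k,l|u,i) = p(k|u)·p(l|i), the quantity R equals the mutual information MI(U;I) of the user and item representations.) -/
/-- Under the conditional-independence factorization
`p(u,i,k,l) = p_UI(u,i) * q(u,k) * r(i,l)`, the quantity `R` equals the mutual
information `MI(U;I)` of the user and item representations. -/
theorem R_eq_mi_UI
    {U I K L : Type*} [Fintype U] [Fintype I] [Fintype K] [Fintype L]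
    [Nonempty U] [Nonempty I] [Nonempty K] [Nonempty L]
    (pUI : U → I → ℝ)
    (hUIpos : ∀ u i, 0 < pUI u i)
    (hUIsum : ∑ u, ∑ i, pUI u i = 1)
    (q : U → K → ℝ)
    (hqpos : ∀ u k, 0 < q u k) (hqsum : ∀ u, ∑ k, q u k = 1)
    (r : I → L → ℝ)
    (hrpos : ∀ i l, 0 < r i l) (hrsum : ∀ i, ∑ l, r i l = 1)
    (p : U → I → K → L → ℝ)
    (hp : ∀ u i k l, p u i k l = pUI u i * q u k * r i l)
    (pUK : U → K → ℝ) (hpUK : ∀ u k, pUK u k = ∑ i, ∑ l, p u i k l)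
    (pIL : I → L → ℝ) (hpIL : ∀ i l, pIL i l = ∑ u, ∑ k, p u i k l)
    (pU : U → ℝ) (hpU : ∀ u, pU u = ∑ i, pUI u i)
    (pI : I → ℝ) (hpI : ∀ i, pI i = ∑ u, pUI u i) :
    ∑ u, ∑ i, ∑ k, ∑ l,
        p u i k l * Real.log (p u i k l / (pUK u k * pIL i l))
      = ∑ u, ∑ i, pUI u i * Real.log (pUI u i / (pU u * pI i)) := by
  have hUK : ∀ u k, pUK u k = pU u * q u k := by
    intro u k
    simp only [hpUK, hp, hpU]
    rw [Finset.sum_mul]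
    refine Finset.sum_congr rfl fun i _ => ?_
    rw [← Finset.mul_sum, hrsum, mul_one]
  have hIL : ∀ i l, pIL i l = pI i * r i l := by
    intro i l
    simp only [hpIL, hp, hpI]
    rw [Finset.sum_mul]
    refine Finset.sum_congr rfl fun u _ => ?_
    have : ∀ k, pUI u i * q u k * r i l = (pUI u i * r i l) * q u k := by
      intro k; ring
    simp only [this]
    rw [← Finset.mul_sum, hqsum, mul_one]
  refine Finset.sum_congr rfl fun u _ => Finset.sum_congr rfl fun i _ => ?_
  have hratio : ∀ k l, p u i k l / (pUK u k * pIL i l)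
      = pUI u i / (pU u * pI i) := by
    intro k l
    rw [hp, hUK, hIL]
    have hq := (hqpos u k).ne'
    have hr := (hrpos i l).ne'
    have h1 : pUI u i * q u k * r i l = pUI u i * (q u k * r i l) := by ring
    have h2 : pU u * q u k * (pI i * r i l) = pU u * pI i * (q u k * r i l) := by
      ring
    rw [h1, h2, mul_div_mul_right _ _ (mul_ne_zero hq hr)]
  calc ∑ k, ∑ l, p u i k l * Real.log (p u i k l / (pUK u k * pIL i l))
      = ∑ k, ∑ l, p u i k l * Real.log (pUI u i / (pU u * pI i)) := by
        refine Finset.sum_congr rfl fun k _ => Finset.sum_congr rfl fun l _ => ?_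
        rw [hratio]
    _ = (∑ k, ∑ l, p u i k l) * Real.log (pUI u i / (pU u * pI i)) := by
        rw [Finset.sum_mul]
        refine Finset.sum_congr rfl fun k _ => ?_
        rw [Finset.sum_mul]
    _ = pUI u i * Real.log (pUI u i / (pU u * pI i)) := by
        congr 1
        simp only [hp]
        calc ∑ k, ∑ l, pUI u i * q u k * r i l
            = ∑ k, pUI u i * q u k := by
              refine Finset.sum_congr rfl fun k _ => ?_
              rw [← Finset.mul_sum, hrsum, mul_one]
          _ = pUI u i := by rw [← Finset.mul_sum, hqsum, mul_one]
end
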